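/- Every integral representation of the cyclic group of order 2 is a signed permutation representation. Precisely: let M be a finitely generated free ℤ-module and let σ : M → M be a ℤ-linear automorphism with σ ∘ σ = id. Then there exists a ℤ-basis (b_1, ..., b_n) of M, a permutation π of {1, ..., n}, and signs ε_1, ..., ε_n ∈ {+1, −1} such that σ(b_i) = ε_i · b_{π(i)} for all i. -/

import Mathlib

/-!
Let `N = ker (σ + 1)` and `Q = range (σ + 1)`, so that `0 → N → M → Q → 0` is exact with `Q`
free. For a section `s` of `M → Q` the defect `σ ∘ s - s` takes values in `N` (as `σ` is an
involution), and replacing `s` by `s + d` changes the defect by `-2 d`. Bringing the defect into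
Smith normal form and reducing its diagonal entries modulo 2 yields a basis of `M` consisting of
vectors `f` with `σ f = -f`, vectors `e` with `σ e = e`, and pairs `(f, e)` with `σ f = -f` and
`σ e = e + f`. Replacing `f` by `e + f = σ e` in each pair makes `σ` swap the two vectors.
-/

open Module

theorem Function.Exact.exists_basis_sum {R K A B ι κ : Type*} [Ring R] [AddCommGroup K]
    [AddCommGroup A] [AddCommGroup B] [Module R K] [Module R A] [Module R B]
    {f : K →ₗ[R] A} {g : A →ₗ[R] B} (hfg : Function.Exact f g) (hf : Function.Injective f)
    (s : B →ₗ[R] A) (hs : g ∘ₗ s = .id) (bK : Basis κ R K) (bB : Basis ι R B) :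
    ∃ b : Basis (κ ⊕ ι) R A, (∀ j, b (.inl j) = f (bK j)) ∧ ∀ i, b (.inr i) = s (bB i) := by
  let e := hfg.splitSurjectiveEquiv hf ⟨s, hs⟩
  have hinr : e.1.symm ∘ₗ LinearMap.inr R K B = s :=
    congrArg Subtype.val ((hfg.splitSurjectiveEquiv hf).symm_apply_apply ⟨s, hs⟩)
  refine ⟨(bK.prod bB).map e.1.symm, fun j => ?_, fun i => ?_⟩
  · simp [e.2.1]
  · simp [← hinr]

theorem LinearMap.exists_basis_smith {R Q F : Type*} [CommRing R] [IsDomain R]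
    [IsPrincipalIdealRing R] [AddCommGroup Q] [Module R Q] [Module.Free R Q] [Module.Finite R Q]
    [AddCommGroup F] [Module R F] [Module.Free R F] [Module.Finite R F] (c : Q →ₗ[R] F) :
    ∃ (ι₀ κ₀ ι : Type) (bQ : Basis (ι₀ ⊕ ι) R Q) (bF : Basis (κ₀ ⊕ ι) R F) (a : ι → R),
      (∀ j, c (bQ (.inl j)) = 0) ∧ ∀ i, c (bQ (.inr i)) = a i • bF (.inr i) := by
  obtain ⟨n, bF, bN, f, a, snf⟩ := (range c).smithNormalForm (finBasis R F)
  obtain ⟨t, ht⟩ :=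
    Module.projective_lifting_property c.rangeRestrict .id c.surjective_rangeRestrict
  obtain ⟨k, bK⟩ := (ker c).basisOfPid (finBasis R Q)
  have hexact : Function.Exact (ker c).subtype c.rangeRestrict :=
    LinearMap.exact_iff.mpr (by rw [ker_rangeRestrict, Submodule.range_subtype])
  obtain ⟨bQ, hbK, hbN⟩ := hexact.exists_basis_sum Subtype.val_injective t ht bK bN
  let e : ↥(Set.range f)ᶜ ⊕ Fin n ≃ Fin (finrank R F) :=
    (Equiv.sumComm _ _).trans
      ((Equiv.sumCongr (Equiv.ofInjective f f.injective) (.refl _)).trans (Equiv.Set.sumCompl _))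
  refine ⟨Fin k, _, Fin n, bQ, bF.reindex e.symm, a, fun j => ?_, fun i => ?_⟩
  · rw [hbK]
    exact (bK j).2
  · have he : e (.inr i) = f i := rfl
    rw [hbN, Basis.reindex_apply, Equiv.symm_symm, he, ← snf]
    exact congrArg Subtype.val (LinearMap.congr_fun ht (bN i))

theorem LinearMap.exists_basis_smith_mod_two {Q F : Type*}
    [AddCommGroup Q] [Module.Free ℤ Q] [Module.Finite ℤ Q]
    [AddCommGroup F] [Module.Free ℤ F] [Module.Finite ℤ F] (c : Q →ₗ[ℤ] F) :
    ∃ (ι₀ κ₀ ι : Type) (bQ : Basis (ι₀ ⊕ ι) ℤ Q) (bF : Basis (κ₀ ⊕ ι) ℤ F) (d : Q →ₗ[ℤ] F),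
      (∀ j, (c - (2 : ℤ) • d) (bQ (.inl j)) = 0) ∧
      ∀ i, (c - (2 : ℤ) • d) (bQ (.inr i)) = bF (.inr i) := by
  obtain ⟨ι₀, κ₀, ι, bQ, bF, a, hker, hsnf⟩ := c.exists_basis_smith
  let d : Q →ₗ[ℤ] F := bQ.constr ℤ (Sum.elim 0 fun i => (a i / 2) • bF (.inr i))
  have hd : ∀ i, (c - (2 : ℤ) • d) (bQ (.inr i)) = (a i - 2 * (a i / 2)) • bF (.inr i) := by
    intro i
    simp [d, hsnf, sub_smul, mul_smul]
  let eQ : (ι₀ ⊕ {i // Even (a i)}) ⊕ {i // ¬Even (a i)} ≃ ι₀ ⊕ ι :=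
    (Equiv.sumAssoc _ _ _).trans (Equiv.sumCongr (.refl _) (Equiv.sumCompl _))
  let eF : (κ₀ ⊕ {i // Even (a i)}) ⊕ {i // ¬Even (a i)} ≃ κ₀ ⊕ ι :=
    (Equiv.sumAssoc _ _ _).trans (Equiv.sumCongr (.refl _) (Equiv.sumCompl _))
  refine ⟨_, _, _, bQ.reindex eQ.symm, bF.reindex eF.symm, d, ?_, fun i => ?_⟩
  · rintro (j | ⟨i, hi⟩)
    · simp [eQ, d, hker]
    · simpa [eQ, Int.two_mul_ediv_two_of_even hi] using hd i
  · have h1 : a i - 2 * (a i / 2) = 1 := by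
      have := Int.two_mul_ediv_two_add_one_of_odd (Int.not_even_iff_odd.mp i.2)
      omega
    simpa [eQ, eF, h1] using hd i

namespace Module.Basis

variable {ι R M : Type*}

section Ring

variable [Ring R] [AddCommGroup M] [Module R M]

def IsSignedPermutation (b : Basis ι R M) (σ : M →ₗ[R] M) : Prop :=
  ∃ (π : Equiv.Perm ι) (ε : ι → R), (∀ i, ε i = 1 ∨ ε i = -1) ∧ ∀ i, σ (b i) = ε i • b (π i)

theorem IsSignedPermutation.reindex {κ : Type*} {b : Basis ι R M} {σ : M →ₗ[R] M}
    (h : b.IsSignedPermutation σ) (e : ι ≃ κ) : (b.reindex e).IsSignedPermutation σ := by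
  obtain ⟨π, ε, hε, hσ⟩ := h
  exact ⟨e.permCongr π, ε ∘ e.symm, fun i => hε _, fun i => by simp [hσ]⟩

theorem exists_eq_add_apply_of_mul_self_eq_zero (b : Basis ι R M) {u : Module.End R M}
    (hu : u * u = 0) : ∃ b' : Basis ι R M, ∀ i, b' i = b i + u (b i) := by
  have h₁ : (1 + u) * (1 - u) = 1 := by simp [mul_sub, add_mul, hu]
  have h₂ : (1 - u) * (1 + u) = 1 := by simp [mul_add, sub_mul, hu]
  exact ⟨b.map (.ofLinearMap (1 + u) (1 - u) h₁ h₂), fun i => rfl⟩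

end Ring

theorem exists_isSignedPermutation_of_blocks [CommRing R] [AddCommGroup M] [Module R M]
    {α β : Type*} {σ : M →ₗ[R] M} (b : Basis ((α ⊕ β) ⊕ (ι ⊕ ι)) R M)
    (hα : ∀ j, σ (b (.inl (.inl j))) = -b (.inl (.inl j)))
    (hβ : ∀ j, σ (b (.inl (.inr j))) = b (.inl (.inr j)))
    (hf : ∀ i, σ (b (.inr (.inl i))) = -b (.inr (.inl i)))
    (he : ∀ i, σ (b (.inr (.inr i))) = b (.inr (.inr i)) + b (.inr (.inl i))) :
    ∃ b' : Basis ((α ⊕ β) ⊕ (ι ⊕ ι)) R M, b'.IsSignedPermutation σ := by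
  let u : Module.End R M := b.constr R (Sum.elim 0 (Sum.elim (fun i => b (.inr (.inr i))) 0))
  have hu : u * u = 0 := b.ext fun x => by rcases x with (j | j) | (i | i) <;> simp [u]
  obtain ⟨b', hb'⟩ := b.exists_eq_add_apply_of_mul_self_eq_zero hu
  refine ⟨b', .sumCongr (.refl _) (.sumComm ι ι),
    Sum.elim (Sum.elim (fun _ => -1) fun _ => 1) fun _ => 1, ?_, ?_⟩
  · rintro ((j | j) | (i | i)) <;> simp
  · rintro ((j | j) | (i | i)) <;> simp [hb', u, hα, hβ, hf, he, add_comm]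

end Module.Basis

theorem exists_basis_blocks_of_involutive {M : Type*} [AddCommGroup M] [Module.Free ℤ M]
    [Module.Finite ℤ M] {σ : M →ₗ[ℤ] M} (hσ : ∀ x, σ (σ x) = x) :
    ∃ (α β ι : Type) (b : Basis ((α ⊕ β) ⊕ (ι ⊕ ι)) ℤ M),
      (∀ j, σ (b (.inl (.inl j))) = -b (.inl (.inl j))) ∧
      (∀ j, σ (b (.inl (.inr j))) = b (.inl (.inr j))) ∧
      (∀ i, σ (b (.inr (.inl i))) = -b (.inr (.inl i))) ∧
      ∀ i, σ (b (.inr (.inr i))) = b (.inr (.inr i)) + b (.inr (.inl i)) := by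
  set N := LinearMap.ker (σ + 1)
  have hN : ∀ x, x ∈ N ↔ σ x = -x := fun x => by
    simp [N, eq_neg_iff_add_eq_zero]
  have hdiff : ∀ x, σ x - x ∈ N := fun x => by
    rw [hN, map_sub, hσ, neg_sub]
  set p := (σ + 1).rangeRestrict
  have hexact : Function.Exact N.subtype p :=
    LinearMap.exact_iff.mpr (by rw [LinearMap.ker_rangeRestrict, Submodule.range_subtype])
  obtain ⟨s, hs⟩ := Module.projective_lifting_property p .id (σ + 1).surjective_rangeRestrict
  let c : LinearMap.range (σ + 1) →ₗ[ℤ] N :=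
    (σ ∘ₗ s - s).codRestrict N fun q => hdiff (s q)
  obtain ⟨ι₀, κ₀, ι, bQ, bN, d, hker, hsnf⟩ := c.exists_basis_smith_mod_two
  let s' := s + N.subtype ∘ₗ d
  have hs' : p ∘ₗ s' = .id := LinearMap.ext fun q => by
    have hpd : p (d q) = 0 := (hexact _).mpr ⟨d q, rfl⟩
    have hps : p (s q) = q := LinearMap.congr_fun hs q
    simp [s', hpd, hps]
  have hσs' : ∀ q, σ (s' q) = s' q + ((c - (2 : ℤ) • d) q : M) := fun q => by
    have hd : σ (d q) = -(d q : M) := (hN _).mp (d q).2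
    simp [s', c, hd]
    abel
  obtain ⟨b, hbN, hbQ⟩ := hexact.exists_basis_sum Subtype.val_injective s' hs' bN bQ
  refine ⟨κ₀, ι₀, ι, b.reindex (Equiv.sumSumSumComm _ _ _ _), ?_, ?_, ?_, ?_⟩
  · intro j
    simpa [hbN] using (hN _).mp (bN (.inl j)).2
  · intro j
    simp [hbQ, hσs', hker]
  · intro i
    simpa [hbN] using (hN _).mp (bN (.inr i)).2
  · intro i
    simp [hbQ, hbN, hσs', hsnf]

/-- Every integral representation of the cyclic group of order 2 is a signed
permutation representation: if `σ` is a `ℤ`-linear involution of a finitely generated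
free `ℤ`-module `M`, then `M` has a `ℤ`-basis each of whose elements is sent by `σ`
to plus or minus a basis element. -/
theorem integral_rep_of_C2_is_signed_permutation
    (M : Type*) [AddCommGroup M] [Module ℤ M] [Module.Free ℤ M] [Module.Finite ℤ M]
    (σ : M ≃ₗ[ℤ] M) (hσ : ∀ x : M, σ (σ x) = x) :
    ∃ (n : ℕ) (b : Module.Basis (Fin n) ℤ M) (π : Equiv.Perm (Fin n)) (ε : Fin n → ℤ),
      (∀ i, ε i = 1 ∨ ε i = -1) ∧ ∀ i, σ (b i) = ε i • b (π i) := by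
  obtain rfl : ‹Module ℤ M› = AddCommGroup.toIntModule M := Subsingleton.elim _ _
  obtain ⟨α, β, ι, b, hα, hβ, hf, he⟩ := exists_basis_blocks_of_involutive (σ := σ.toLinearMap) hσ
  obtain ⟨b', hb'⟩ := b.exists_isSignedPermutation_of_blocks hα hβ hf he
  have := Module.Finite.finite_basis b'
  obtain ⟨π, ε, hε, hσb⟩ := hb'.reindex (Finite.equivFin _)
  exact ⟨_, _, π, ε, hε, hσb⟩
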